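/- arXiv:2406.05614 — 2 statements merged into one kernel-verified Lean document; each statement's English description precedes it below -/
import Mathlib

section
/- For every f ∈ C_c^∞((1,∞), ℂ) and every λ ≥ 0, the distorted Fourier transform diagonalizes the radial Dirichlet Laplacian: √(2/π) ∫₁^∞ sin(λ(s−1)) · (−f''(s) − (2/s)f'(s)) · s ds = λ² · 𝓕_D f(λ). -/
/-! With `g(s) = s f(s)` one has `s Δf = g''`, and `u(s) = sin(λ(s-1))` solves `u'' = -λ² u`
with `u(1) = 0`. Integrating by parts twice on `(1, ∞)` moves the second derivative from `g`
to `u`; the boundary terms vanish since `u(1) = g(1) = 0` and `g` has compact support. -/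

open MeasureTheory Set

/-- The distorted Fourier transform adapted to the radial Dirichlet Laplacian on
the exterior of the unit ball: `𝓕_D f (λ) = √(2/π) ∫₁^∞ sin(λ(s−1)) f(s) s ds`. -/
noncomputable def distFT (f : ℝ → ℂ) (lam : ℝ) : ℂ :=
  (Real.sqrt (2 / Real.pi) : ℂ) *
    ∫ s in Ioi (1 : ℝ), (Real.sin (lam * (s - 1)) : ℂ) * f s * (s : ℂ)

section

variable {A : Type*} [NormedCommRing A] [NormedAlgebra ℝ A] [CompleteSpace A]

theorem integral_Ioi_mul_deriv_deriv {u v : ℝ → A} (hu : ContDiff ℝ 2 u)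
    (hv : ContDiff ℝ 2 v) (hv_supp : HasCompactSupport v) (a : ℝ) :
    ∫ x in Ioi a, u x * deriv (deriv v) x =
      (∫ x in Ioi a, deriv (deriv u) x * v x) + (deriv u a * v a - u a * deriv v a) := by
  have hu' : ContDiff ℝ 1 (deriv u) := hu.deriv'
  have hv' : ContDiff ℝ 1 (deriv v) := hv.deriv'
  -- `W = u v' - u' v` is the Wronskian; the cross terms `u' v'` cancel in `W'`.
  have hW_deriv : deriv (u * deriv v - deriv u * v) =
      fun x => u x * deriv (deriv v) x - deriv (deriv u) x * v x := by
    funext x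
    have hu1 := (hu.differentiable two_ne_zero x).hasDerivAt
    have hv1 := (hv.differentiable two_ne_zero x).hasDerivAt
    have hu2 := (hu'.differentiable one_ne_zero x).hasDerivAt
    have hv2 := (hv'.differentiable one_ne_zero x).hasDerivAt
    rw [((hu1.mul hv2).sub (hu2.mul hv1)).deriv]
    abel
  have hW_smooth : ContDiff ℝ 1 (u * deriv v - deriv u * v) :=
    ((hu.of_le one_le_two).mul hv').sub (hu'.mul (hv.of_le one_le_two))
  have hW_supp : HasCompactSupport (u * deriv v - deriv u * v) :=
    hv_supp.deriv.mul_left.sub hv_supp.mul_left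
  have hint_left : IntegrableOn (fun x => u x * deriv (deriv v) x) (Ioi a) :=
    (hu.continuous.mul hv'.continuous_deriv_one).integrable_of_hasCompactSupport
      hv_supp.deriv.deriv.mul_left |>.integrableOn
  have hint_right : IntegrableOn (fun x => deriv (deriv u) x * v x) (Ioi a) :=
    (hu'.continuous_deriv_one.mul hv.continuous).integrable_of_hasCompactSupport
      hv_supp.mul_left |>.integrableOn
  have hftc := hW_supp.integral_Ioi_deriv_eq hW_smooth a
  rw [hW_deriv, integral_sub hint_left hint_right] at hftc
  rw [sub_eq_iff_eq_add'.mp hftc]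
  simp only [Pi.sub_apply, Pi.mul_apply]
  abel

theorem integral_Ioi_mul_deriv_deriv_eq_of_eq_zero {u v : ℝ → A} (hu : ContDiff ℝ 2 u)
    (hv : ContDiff ℝ 2 v) (hv_supp : HasCompactSupport v) {a : ℝ} (hua : u a = 0)
    (hva : v a = 0) :
    ∫ x in Ioi a, u x * deriv (deriv v) x = ∫ x in Ioi a, deriv (deriv u) x * v x := by
  simp [integral_Ioi_mul_deriv_deriv hu hv hv_supp a, hua, hva]

end

theorem deriv_deriv_id_smul {E : Type*} [NormedAddCommGroup E] [NormedSpace ℝ E] {f : ℝ → E}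
    (hf : ContDiff ℝ 2 f) (s : ℝ) :
    deriv (deriv fun x => x • f x) s = s • deriv (deriv f) s + (2 : ℝ) • deriv f s := by
  have hf1 : Differentiable ℝ f := hf.differentiable two_ne_zero
  have hf2 : Differentiable ℝ (deriv f) := hf.differentiable_deriv_two
  have hderiv : deriv (fun x => x • f x) = fun x => x • deriv f x + f x := by
    funext x
    rw [((hasDerivAt_id' x).fun_smul (hf1 x).hasDerivAt).deriv, one_smul]
  rw [hderiv, (((hasDerivAt_id' s).fun_smul (hf2 s).hasDerivAt).fun_add (hf1 s).hasDerivAt).deriv,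
    one_smul, two_smul]
  abel

theorem deriv_deriv_ofReal_sin_mul_sub (ω a x : ℝ) :
    deriv (deriv fun x => (Real.sin (ω * (x - a)) : ℂ)) x =
      -(ω : ℂ) ^ 2 * Real.sin (ω * (x - a)) := by
  have hphase (x : ℝ) : HasDerivAt (fun x => ω * (x - a)) ω x := by
    simpa using ((hasDerivAt_id x).sub_const a).const_mul ω
  have hderiv : deriv (fun x => (Real.sin (ω * (x - a)) : ℂ)) =
      fun x => ((Real.cos (ω * (x - a)) * ω : ℝ) : ℂ) := by
    funext x
    exact ((Real.hasDerivAt_sin _).comp x (hphase x)).ofReal_comp.deriv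
  rw [hderiv]
  exact ((((Real.hasDerivAt_cos _).comp x (hphase x)).mul_const ω).ofReal_comp.deriv).trans
    (by push_cast; ring)

theorem distFT_diagonalizes_radial_laplacian_general
    (f : ℝ → ℂ) (hf : ContDiff ℝ (⊤ : ℕ∞) f) (hsupp : HasCompactSupport f)
    (hsupp' : tsupport f ⊆ Ioi (1 : ℝ)) (lam : ℝ) :
    (Real.sqrt (2 / Real.pi) : ℂ) *
        (∫ s in Ioi (1 : ℝ),
          (Real.sin (lam * (s - 1)) : ℂ) *
            (-(deriv (deriv f) s) - (2 / (s : ℂ)) * deriv f s) * (s : ℂ))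
      = (lam : ℂ) ^ 2 * distFT f lam := by
  have hf2 : ContDiff ℝ 2 f := hf.of_le (by norm_cast)
  have hf_one : f 1 = 0 :=
    image_eq_zero_of_notMem_tsupport fun h => lt_irrefl _ (mem_Ioi.mp (hsupp' h))
  have hu : ContDiff ℝ 2 fun s : ℝ => (Real.sin (lam * (s - 1)) : ℂ) :=
    Complex.ofRealCLM.contDiff.comp (Real.contDiff_sin.comp (by fun_prop))
  have hparts := integral_Ioi_mul_deriv_deriv_eq_of_eq_zero (a := 1) (v := fun s => s • f s) hu
    (contDiff_id.smul hf2) (hsupp.smul_left (f := id)) (by simp) (by simp [hf_one])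
  have hradial : ∀ s ∈ Ioi (1 : ℝ), (Real.sin (lam * (s - 1)) : ℂ) *
      (-(deriv (deriv f) s) - (2 / (s : ℂ)) * deriv f s) * (s : ℂ) =
      -((Real.sin (lam * (s - 1)) : ℂ) * deriv (deriv fun s => s • f s) s) := by
    intro s hs
    have hs0 : (s : ℂ) ≠ 0 := Complex.ofReal_ne_zero.mpr (by linarith [mem_Ioi.mp hs])
    rw [deriv_deriv_id_smul hf2, Complex.real_smul, Complex.real_smul]
    field_simp
    push_cast
    ring
  have hsine (s : ℝ) : deriv (deriv fun s => (Real.sin (lam * (s - 1)) : ℂ)) s * s • f s =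
      -(lam : ℂ) ^ 2 * ((Real.sin (lam * (s - 1)) : ℂ) * f s * s) := by
    rw [deriv_deriv_ofReal_sin_mul_sub, Complex.real_smul]
    ring
  rw [setIntegral_congr_fun measurableSet_Ioi hradial, integral_neg, hparts, funext hsine,
    integral_const_mul, distFT]
  ring

/-- For every `f ∈ C_c^∞((1,∞), ℂ)` and every `λ ≥ 0`, the distorted
Fourier transform diagonalizes the radial Dirichlet Laplacian:
`√(2/π) ∫₁^∞ sin(λ(s−1)) (−f''(s) − (2/s) f'(s)) s ds = λ² 𝓕_D f (λ)`. -/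
theorem distFT_diagonalizes_radial_laplacian
    (f : ℝ → ℂ) (hf : ContDiff ℝ (⊤ : ℕ∞) f) (hsupp : HasCompactSupport f)
    (hsupp' : tsupport f ⊆ Ioi (1 : ℝ)) (lam : ℝ) (hlam : 0 ≤ lam) :
    (Real.sqrt (2 / Real.pi) : ℂ) *
        (∫ s in Ioi (1 : ℝ),
          (Real.sin (lam * (s - 1)) : ℂ) *
            (-(deriv (deriv f) s) - (2 / (s : ℂ)) * deriv f s) * (s : ℂ))
      = (lam : ℂ) ^ 2 * distFT f lam :=
  distFT_diagonalizes_radial_laplacian_general f hf hsupp hsupp' lam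
end

section
/- Distorted Fourier inversion: for every f ∈ C_c^∞((1,∞), ℂ) and every r > 1, one has √(2/π) ∫₀^∞ (sin(λ(r−1))/r) · 𝓕_D f(λ) dλ = f(r), the integral converging absolutely since 𝓕_D f decays rapidly. -/
/-!
Put `φ s = s f(s)` and let `g x = φ(1 + x) - φ(1 - x)` be the odd reflection of `φ` about `s = 1`.
Since `f` vanishes on `s ≤ 1`, the distorted transform is `√(2/π)` times the sine transform
`S g (λ) = ∫₀^∞ sin(λx) g(x) dx`. For odd integrable `g` one has `𝓕 g ξ = -2i S g (2πξ)`, so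
Fourier inversion for the smooth compactly supported (hence Schwartz) function `g` becomes the
sine inversion formula `(2/π) ∫₀^∞ sin(λt) S g(λ) dλ = g(t)`, and `g(r - 1) = r f(r)`.
-/

open MeasureTheory Set

open scoped FourierTransform Real

section

variable {E : Type*} [NormedAddCommGroup E] [NormedSpace ℝ E]

lemma integral_Ioi_comp_const_add (g : ℝ → E) (a b : ℝ) :
    ∫ x in Ioi a, g (b + x) = ∫ x in Ioi (b + a), g x := by
  rw [← (measurePreserving_add_left volume b).setIntegral_preimage_emb
    (measurableEmbedding_addLeft b) g (Ioi (b + a)), preimage_const_add_Ioi, add_sub_cancel_left]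

lemma integral_eq_integral_Ioi_add_comp_neg {F : ℝ → E} (hF : Integrable F) :
    ∫ x, F x = ∫ x in Ioi 0, (F x + F (-x)) := by
  rw [← intervalIntegral.integral_Iic_add_Ioi hF.integrableOn hF.integrableOn,
    integral_add hF.integrableOn hF.comp_neg.integrableOn, ← integral_comp_neg_Ioi, neg_zero,
    add_comm]

end

def oddReflection {E : Type*} [Sub E] (a : ℝ) (φ : ℝ → E) (x : ℝ) : E :=
  φ (a + x) - φ (a - x)

section oddReflection

variable {E : Type*} {a : ℝ} {φ : ℝ → E}

lemma oddReflection_odd [AddGroup E] : Function.Odd (oddReflection a φ) := fun x => by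
  simp only [oddReflection, sub_neg_eq_add, neg_sub, ← sub_eq_add_neg]

lemma oddReflection_of_nonneg [SubNegZeroMonoid E] (hφ : Function.support φ ⊆ Ioi a) {x : ℝ}
    (hx : 0 ≤ x) : oddReflection a φ x = φ (a + x) := by
  have hzero : φ (a - x) = 0 :=
    Function.notMem_support.mp fun h => (mem_Ioi.mp (hφ h)).not_ge (sub_le_self a hx)
  rw [oddReflection, hzero, sub_zero]

lemma HasCompactSupport.oddReflection [SubtractionMonoid E] (hφ : HasCompactSupport φ) (a : ℝ) :
    HasCompactSupport (oddReflection a φ) :=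
  (hφ.comp_homeomorph (Homeomorph.addLeft a)).sub (hφ.comp_homeomorph (Homeomorph.subLeft a))

lemma ContDiff.oddReflection [NormedAddCommGroup E] [NormedSpace ℝ E] {n : WithTop ℕ∞}
    (hφ : ContDiff ℝ n φ) (a : ℝ) : ContDiff ℝ n (oddReflection a φ) := by
  unfold _root_.oddReflection
  fun_prop

end oddReflection

noncomputable def sineTransform (h : ℝ → ℂ) (a : ℝ) : ℂ :=
  ∫ x in Ioi 0, (Real.sin (a * x) : ℂ) * h x

lemma sineTransform_neg (h : ℝ → ℂ) (a : ℝ) : sineTransform h (-a) = -sineTransform h a := by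
  simp only [sineTransform, ← integral_neg, neg_mul, Real.sin_neg, Complex.ofReal_neg]

lemma fourierChar_neg_sub_fourierChar (y : ℝ) :
    (𝐞 (-y) : ℂ) - 𝐞 y = -2 * Complex.I * Real.sin (2 * π * y) := by
  rw [Real.fourierChar_apply, Real.fourierChar_apply, Complex.ofReal_sin, Complex.sin]
  push_cast
  ring_nf
  rw [Complex.I_sq]
  ring

lemma fourier_eq_sineTransform_of_odd {h : ℝ → ℂ} (hint : Integrable h) (hodd : Function.Odd h)
    (ξ : ℝ) : 𝓕 h ξ = -2 * Complex.I * sineTransform h (2 * π * ξ) := by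
  have hconv : Integrable fun v : ℝ => 𝐞 (-(v * ξ)) • h v := by
    simpa [mul_comm] using (Real.fourierIntegral_convergent_iff (μ := volume) ξ).2 hint
  rw [Real.fourier_real_eq, integral_eq_integral_Ioi_add_comp_neg hconv,
    sineTransform, ← integral_const_mul]
  refine setIntegral_congr_fun measurableSet_Ioi fun x _ => ?_
  rw [neg_mul, neg_neg, hodd x, Circle.smul_def, Circle.smul_def, smul_neg, ← sub_eq_add_neg,
    ← sub_smul, smul_eq_mul, fourierChar_neg_sub_fourierChar, mul_comm x ξ, ← mul_assoc]
  ring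

lemma fourier_odd_of_odd {h : ℝ → ℂ} (hint : Integrable h) (hodd : Function.Odd h) :
    Function.Odd (𝓕 h) := fun ξ => by
  rw [fourier_eq_sineTransform_of_odd hint hodd, fourier_eq_sineTransform_of_odd hint hodd,
    mul_neg, sineTransform_neg, mul_neg]

theorem sineTransform_inversion {h : ℝ → ℂ} (hcont : Continuous h) (hint : Integrable h)
    (hFint : Integrable (𝓕 h)) (hodd : Function.Odd h) (t : ℝ) :
    (2 / π : ℂ) * ∫ a in Ioi 0, (Real.sin (a * t) : ℂ) * sineTransform h a = h t := by
  calc (2 / π : ℂ) * ∫ a in Ioi 0, (Real.sin (a * t) : ℂ) * sineTransform h a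
      = 4 * ∫ ξ in Ioi 0, (Real.sin (2 * π * ξ * t) : ℂ) * sineTransform h (2 * π * ξ) := by
        rw [integral_comp_mul_left_Ioi (fun a => (Real.sin (a * t) : ℂ) * sineTransform h a) 0
          Real.two_pi_pos, mul_zero, Complex.real_smul, ← mul_assoc]
        congr 1
        push_cast
        field_simp
        norm_num
    _ = 2 * Complex.I * sineTransform (𝓕 h) (2 * π * t) := by
        rw [sineTransform, ← integral_const_mul, ← integral_const_mul]
        refine setIntegral_congr_fun measurableSet_Ioi fun ξ _ => ?_
        rw [fourier_eq_sineTransform_of_odd hint hodd, mul_right_comm (2 * π) ξ t]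
        linear_combination
          (4 : ℂ) * (Real.sin (2 * π * t * ξ) : ℂ) * sineTransform h (2 * π * ξ) * Complex.I_mul_I
    _ = 𝓕 (𝓕 h) (-t) := by
        rw [fourier_eq_sineTransform_of_odd hFint (fourier_odd_of_odd hint hodd), mul_neg,
          sineTransform_neg]
        ring
    _ = h t := by
        rw [← Real.fourierInv_eq_fourier_neg, hint.fourierInv_fourier_eq hFint hcont.continuousAt]

lemma distFT_eq_sineTransform {f : ℝ → ℂ} (hf : Function.support f ⊆ Ioi 1) (lam : ℝ) :
    distFT f lam =
      (Real.sqrt (2 / π) : ℂ) * sineTransform (oddReflection 1 fun s => f s * (s : ℂ)) lam := by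
  have hφ : Function.support (fun s => f s * (s : ℂ)) ⊆ Ioi 1 :=
    (Function.support_mul_subset_left _ _).trans hf
  have hshift := integral_Ioi_comp_const_add
    (fun s => (Real.sin (lam * (s - 1)) : ℂ) * f s * (s : ℂ)) 0 1
  rw [add_zero] at hshift
  rw [distFT, ← hshift, sineTransform]
  congr 1
  refine setIntegral_congr_fun measurableSet_Ioi fun x hx => ?_
  rw [oddReflection_of_nonneg hφ (mem_Ioi.mp hx).le, add_sub_cancel_left]
  ring

/-- Distorted Fourier inversion: for every `f ∈ C_c^∞((1,∞), ℂ)`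
and every `r > 1`, `√(2/π) ∫₀^∞ (sin(λ(r−1))/r) 𝓕_D f(λ) dλ = f(r)`. -/
theorem distFT_inversion
    (f : ℝ → ℂ) (hf : ContDiff ℝ (⊤ : ℕ∞) f) (hsupp : HasCompactSupport f)
    (hsupp' : tsupport f ⊆ Ioi (1 : ℝ)) (r : ℝ) (hr : 1 < r) :
    (Real.sqrt (2 / Real.pi) : ℂ) *
        (∫ lam in Ioi (0 : ℝ), ((Real.sin (lam * (r - 1)) / r : ℝ) : ℂ) * distFT f lam)
      = f r := by
  set φ : ℝ → ℂ := fun s => f s * (s : ℂ)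
  have hf_supp : Function.support f ⊆ Ioi 1 := (subset_tsupport f).trans hsupp'
  let g : SchwartzMap ℝ ℂ := (hsupp.mul_right.oddReflection 1).toSchwartzMap
    ((hf.mul Complex.ofRealCLM.contDiff).oddReflection 1)
  have hg : (g : ℝ → ℂ) = oddReflection 1 φ := rfl
  have hFg : Integrable (𝓕 (g : ℝ → ℂ)) := SchwartzMap.fourier_coe g ▸ (𝓕 g).integrable
  have hg_at : g (r - 1) = f r * r := by
    rw [hg, oddReflection_of_nonneg ((Function.support_mul_subset_left _ _).trans hf_supp)
      (by linarith), add_sub_cancel]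
  have hsqrt : (Real.sqrt (2 / π) : ℂ) * Real.sqrt (2 / π) = 2 / π := by
    rw [← Complex.ofReal_mul, Real.mul_self_sqrt (by positivity), Complex.ofReal_div,
      Complex.ofReal_ofNat]
  have hr0 : (r : ℂ) ≠ 0 := Complex.ofReal_ne_zero.mpr (by linarith)
  calc (Real.sqrt (2 / π) : ℂ) *
        (∫ lam in Ioi (0 : ℝ), ((Real.sin (lam * (r - 1)) / r : ℝ) : ℂ) * distFT f lam)
      = (2 / π : ℂ) * (∫ lam in Ioi 0,
          (Real.sin (lam * (r - 1)) : ℂ) * sineTransform (oddReflection 1 φ) lam) / r := by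
        have hintegrand : ∀ lam : ℝ, ((Real.sin (lam * (r - 1)) / r : ℝ) : ℂ) * distFT f lam =
            (Real.sqrt (2 / π) / r : ℂ) *
              ((Real.sin (lam * (r - 1)) : ℂ) * sineTransform (oddReflection 1 φ) lam) := by
          intro lam
          rw [distFT_eq_sineTransform hf_supp]
          push_cast
          ring
        simp_rw [hintegrand, integral_const_mul, ← hsqrt]
        ring
    _ = f r := by
        rw [← hg, sineTransform_inversion g.continuous g.integrable hFg oddReflection_odd, hg_at]
        field_simp
end
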